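/- Let n ≥ 1 and let N ⊂ S^{n−1} ⊂ ℝⁿ be a finite 1/2-net of the unit sphere, i.e., for every a ∈ ℝⁿ with ‖a‖₂ = 1 there exists b ∈ N with ‖a − b‖₂ ≤ 1/2. Let A be the |N| × n matrix whose rows are the elements of N. Then disc_v(A) ≤ 1 (witnessed by taking u_j = e_j, the standard basis vectors), while disc_s(A) ≥ √n/2, i.e., for every x ∈ ℝⁿ with ‖x‖₂ = √n one has max_{b∈N} |⟨b, x⟩| ≥ √n/2. -/

import Mathlib

/-!
A unit vector `b` within distance `ε` of a unit vector `a` satisfies `⟪a, b⟫ = 1 - ‖a - b‖² / 2 ≥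
1 - ε² / 2`. Applied to `a = x / ‖x‖` and a net point `b` close to it, this gives
`⟪b, x⟫ ≥ (1 - ε² / 2) ‖x‖`, which for `ε = 1/2` and `‖x‖ = √n` exceeds `√n / 2`. The vector
discrepancy bound is witnessed by the standard basis, which leaves every row of the matrix unchanged.
-/

/-- The Euclidean norm of a vector in ℝ^n. -/
noncomputable def e2 {n : ℕ} (x : Fin n → ℝ) : ℝ := Real.sqrt (∑ j, x j ^ 2)

open RealInnerProductSpace

section InnerProductSpace

variable {E : Type*} [NormedAddCommGroup E] [InnerProductSpace ℝ E]

lemma real_inner_eq_one_sub_norm_sub_sq_div_two {a b : E} (ha : ‖a‖ = 1) (hb : ‖b‖ = 1) :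
    ⟪a, b⟫ = 1 - ‖a - b‖ ^ 2 / 2 := by
  rw [norm_sub_sq_real, ha, hb]
  ring

lemma exists_mem_real_inner_ge_of_sphere_net {N : Set E} {ε : ℝ} (hunit : ∀ b ∈ N, ‖b‖ = 1)
    (hnet : ∀ a : E, ‖a‖ = 1 → ∃ b ∈ N, ‖a - b‖ ≤ ε) {x : E} (hx : x ≠ 0) :
    ∃ b ∈ N, (1 - ε ^ 2 / 2) * ‖x‖ ≤ ⟪b, x⟫ := by
  have hx' : 0 < ‖x‖ := norm_pos_iff.mpr hx
  have hunit_x : ‖‖x‖⁻¹ • x‖ = 1 := by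
    rw [norm_smul, norm_inv, norm_norm, inv_mul_cancel₀ hx'.ne']
  obtain ⟨b, hbN, hab⟩ := hnet (‖x‖⁻¹ • x) hunit_x
  have hdist_sq : ‖‖x‖⁻¹ • x - b‖ ^ 2 ≤ ε ^ 2 := pow_le_pow_left₀ (norm_nonneg _) hab 2
  have hinner : 1 - ε ^ 2 / 2 ≤ ⟪‖x‖⁻¹ • x, b⟫ := by
    rw [real_inner_eq_one_sub_norm_sub_sq_div_two hunit_x (hunit b hbN)]
    linarith
  refine ⟨b, hbN, ?_⟩
  calc (1 - ε ^ 2 / 2) * ‖x‖ ≤ ⟪‖x‖⁻¹ • x, b⟫ * ‖x‖ := by gcongr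
    _ = ⟪b, x⟫ := by
      rw [real_inner_smul_left, real_inner_comm, mul_comm, mul_inv_cancel_left₀ hx'.ne']

end InnerProductSpace

section Coordinates

variable {n : ℕ}

lemma e2_eq_norm_toLp (x : Fin n → ℝ) : e2 x = ‖WithLp.toLp 2 x‖ := by
  simp only [e2, EuclideanSpace.norm_eq, Real.norm_eq_abs, sq_abs]

lemma sum_mul_eq_inner_toLp (b x : Fin n → ℝ) :
    ∑ j, b j * x j = ⟪WithLp.toLp 2 b, WithLp.toLp 2 x⟫ := by
  simp only [PiLp.inner_apply, Real.inner_apply]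

lemma exists_mem_sum_mul_ge_of_e2_sphere_net {N : Set (Fin n → ℝ)} {ε : ℝ}
    (hunit : ∀ b ∈ N, e2 b = 1) (hnet : ∀ a : Fin n → ℝ, e2 a = 1 → ∃ b ∈ N, e2 (a - b) ≤ ε)
    {x : Fin n → ℝ} (hx : x ≠ 0) :
    ∃ b ∈ N, (1 - ε ^ 2 / 2) * e2 x ≤ ∑ j, b j * x j := by
  have hunit' : ∀ b ∈ WithLp.toLp 2 '' N, ‖b‖ = 1 := by
    rintro _ ⟨b, hbN, rfl⟩
    rw [← e2_eq_norm_toLp, hunit b hbN]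
  have hnet' : ∀ a : EuclideanSpace ℝ (Fin n), ‖a‖ = 1 →
      ∃ b ∈ WithLp.toLp 2 '' N, ‖a - b‖ ≤ ε := by
    intro a ha
    obtain ⟨b, hbN, hab⟩ := hnet a.ofLp (by rwa [e2_eq_norm_toLp])
    exact ⟨_, ⟨b, hbN, rfl⟩, by rwa [e2_eq_norm_toLp] at hab⟩
  have hx' : WithLp.toLp 2 x ≠ 0 := by simpa using hx
  obtain ⟨_, ⟨b, hbN, rfl⟩, hb⟩ := exists_mem_real_inner_ge_of_sphere_net hunit' hnet' hx'
  exact ⟨b, hbN, by rwa [e2_eq_norm_toLp, sum_mul_eq_inner_toLp]⟩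

lemma sum_mul_ite_eq (b : Fin n → ℝ) :
    (fun k => ∑ j, b j * (if j = k then (1 : ℝ) else 0)) = b := by
  funext k
  simp [mul_ite]

lemma e2_ite_eq (j : Fin n) : e2 (fun k => if j = k then (1 : ℝ) else 0) = 1 := by
  simp [e2, ite_pow]

end Coordinates

theorem stmt_8 {n : ℕ} (hn : 1 ≤ n) (N : Finset (Fin n → ℝ))
    (hunit : ∀ b ∈ N, e2 b = 1)
    (hnet : ∀ a : Fin n → ℝ, e2 a = 1 → ∃ b ∈ N, e2 (a - b) ≤ 1 / 2) :
    -- vector discrepancy of the matrix whose rows are the elements of N is at most 1,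
    -- witnessed by the standard basis vectors u_j = e_j
    ((∀ b ∈ N, e2 (fun k => ∑ j, b j * (if j = k then (1 : ℝ) else 0)) ≤ 1) ∧
      ∃ u : Fin n → (Fin n → ℝ), (∀ j, e2 (u j) = 1) ∧
        ∀ b ∈ N, e2 (fun k => ∑ j, b j * u j k) ≤ 1) ∧
    -- while its spherical discrepancy is at least √n / 2
    (∀ x : Fin n → ℝ, e2 x = Real.sqrt n →
      ∃ b ∈ N, Real.sqrt n / 2 ≤ |∑ j, b j * x j|) := by
  have hrow : ∀ b ∈ N, e2 (fun k => ∑ j, b j * (if j = k then (1 : ℝ) else 0)) ≤ 1 := by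
    intro b hb
    rw [sum_mul_ite_eq, hunit b hb]
  refine ⟨⟨hrow, fun j k => if j = k then 1 else 0, e2_ite_eq, hrow⟩, fun x hx => ?_⟩
  have hx0 : x ≠ 0 := by
    rintro rfl
    have hpos : 0 < Real.sqrt n := Real.sqrt_pos.mpr (by exact_mod_cast hn)
    exact hpos.ne (by simpa [e2] using hx)
  obtain ⟨b, hbN, hb⟩ := exists_mem_sum_mul_ge_of_e2_sphere_net hunit hnet hx0
  refine ⟨b, hbN, (le_abs_self _).trans' ?_⟩
  rw [hx] at hb
  nlinarith [Real.sqrt_nonneg n]
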